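/- Let R be a right-flat TRS over a signature with constant set Σ_0, let E be a permutative theory over the same signature, and let s be a term such that R/E is terminating from s. Then every term t reachable from s with R/E satisfies height(t) ≤ height(s) + |Σ_0|. -/

import Mathlib

/-- First-order terms over function symbols `F` and variables `V`. -/
inductive Tm (F V : Type) : Type
  | var : V → Tm F V
  | app : F → List (Tm F V) → Tm F V

namespace Tm

variable {F V : Type}

/-- Height of a term: 0 for variables and constants. -/
def height : Tm F V → ℕ
  | var _ => 0
  | app _ ts => ts.attach.foldr (fun t m => max (height t.1 + 1) m) 0
decreasing_by all_goals (simp_wf; have := List.sizeOf_lt_of_mem t.2; omega)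

/-- Size (number of positions) of a term. -/
def size : Tm F V → ℕ
  | var _ => 1
  | app _ ts => 1 + (ts.attach.map (fun t => size t.1)).sum
decreasing_by all_goals (simp_wf; have := List.sizeOf_lt_of_mem t.2; omega)

/-- Apply a substitution. -/
def subst (σ : V → Tm F V) : Tm F V → Tm F V
  | var x => σ x
  | app f ts => app f (ts.attach.map (fun t => subst σ t.1))
decreasing_by all_goals (simp_wf; have := List.sizeOf_lt_of_mem t.2; omega)

/-- List of variable occurrences. -/
def varList : Tm F V → List V
  | var x => [x]
  | app _ ts => (ts.attach.map (fun t => varList t.1)).flatten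
decreasing_by all_goals (simp_wf; have := List.sizeOf_lt_of_mem t.2; omega)

/-- List of function-symbol occurrences. -/
def symList : Tm F V → List F
  | var _ => []
  | app f ts => f :: (ts.attach.map (fun t => symList t.1)).flatten
decreasing_by all_goals (simp_wf; have := List.sizeOf_lt_of_mem t.2; omega)

/-- The subterm at a position (positions are lists of argument indices). -/
def subAt : Tm F V → List ℕ → Option (Tm F V)
  | t, [] => some t
  | var _, _ :: _ => none
  | app _ ts, i :: p => match ts[i]? with
      | some u => subAt u p
      | none => none

/-- Replace the subterm at a position. -/
def replAt : Tm F V → List ℕ → Tm F V → Option (Tm F V)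
  | _, [], s => some s
  | var _, _ :: _, _ => none
  | app f ts, i :: p, s => match ts[i]? with
      | some u => (replAt u p s).map (fun u' => app f (ts.set i u'))
      | none => none

/-- `p` is a position of `t`. -/
def IsPos (t : Tm F V) (p : List ℕ) : Prop := (t.subAt p).isSome

/-- A term is a constant if it is a nullary function application. -/
def IsConst (t : Tm F V) : Prop := ∃ f : F, t = app f []

def Ground (t : Tm F V) : Prop := t.varList = []

/-- A term is linear if each variable occurs at most once. -/
def Linear (t : Tm F V) : Prop := t.varList.Nodup

/-- A term is flat if its height is at most 1. -/
def Flat (t : Tm F V) : Prop := t.height ≤ 1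

/-- A term is shallow if all variables occur at depth at most 1. -/
def Shallow (t : Tm F V) : Prop :=
  ∀ (p : List ℕ) (x : V), t.subAt p = some (var x) → p.length ≤ 1

end Tm

/-- A rewrite rule. -/
structure Rule (F V : Type) where
  lhs : Tm F V
  rhs : Tm F V

namespace Rule

variable {F V : Type}

/-- Standard well-formedness: the lhs is not a variable and variables of the
rhs occur in the lhs. -/
def WF (r : Rule F V) : Prop :=
  (∀ x : V, r.lhs ≠ Tm.var x) ∧ ∀ x ∈ r.rhs.varList, x ∈ r.lhs.varList

def RightFlat (r : Rule F V) : Prop := r.rhs.Flat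
def RightLinear (r : Rule F V) : Prop := r.rhs.Linear
def RightShallow (r : Rule F V) : Prop := r.rhs.Shallow
def FlatRule (r : Rule F V) : Prop := r.lhs.Flat ∧ r.rhs.Flat
def ShallowRule (r : Rule F V) : Prop := r.lhs.Shallow ∧ r.rhs.Shallow
def Collapsing (r : Rule F V) : Prop := ∃ x : V, r.rhs = Tm.var x

/-- A permutative rule: linear, flat, height-preserving and variable-preserving. -/
def Permutative (r : Rule F V) : Prop :=
  r.WF ∧ r.lhs.Linear ∧ r.rhs.Linear ∧ r.lhs.Flat ∧ r.rhs.Flat ∧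
    r.lhs.height = r.rhs.height ∧ ∀ x : V, x ∈ r.lhs.varList ↔ x ∈ r.rhs.varList

end Rule

/-- A permutative theory: a symmetric set of permutative rules. -/
def PermutativeTheory {F V : Type} (E : Set (Rule F V)) : Prop :=
  (∀ r ∈ E, r.Permutative) ∧ ∀ r ∈ E, (⟨r.rhs, r.lhs⟩ : Rule F V) ∈ E

section Rewriting

variable {F V : Type}

/-- One rewrite step with rule `l → r` at position `p` using substitution `σ`. -/
def RewWith (l r : Tm F V) (p : List ℕ) (σ : V → Tm F V) (s t : Tm F V) : Prop :=
  s.subAt p = some (l.subst σ) ∧ s.replAt p (r.subst σ) = some t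

/-- One rewrite step with TRS `R` at position `p`. -/
def RewAt (R : Set (Rule F V)) (p : List ℕ) (s t : Tm F V) : Prop :=
  ∃ r ∈ R, ∃ σ : V → Tm F V, RewWith r.lhs r.rhs p σ s t

/-- One rewrite step with TRS `R`. -/
def Rew (R : Set (Rule F V)) (s t : Tm F V) : Prop := ∃ p, RewAt R p s t

/-- Reachability: reflexive-transitive closure of one-step rewriting. -/
def Reach (R : Set (Rule F V)) : Tm F V → Tm F V → Prop :=
  Relation.ReflTransGen (Rew R)

/-- One rewrite step with `R` modulo `E` : `s →E* · →R · →E* t`. -/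
def RewMod (R E : Set (Rule F V)) (s t : Tm F V) : Prop :=
  ∃ u v, Reach E s u ∧ Rew R u v ∧ Reach E v t

/-- `R/E` is terminating from `s`. -/
def TerminatingFrom (R E : Set (Rule F V)) (s : Tm F V) : Prop :=
  ¬ ∃ f : ℕ → Tm F V, f 0 = s ∧ ∀ n, RewMod R E (f n) (f (n + 1))

/-- `R/E` is terminating. -/
def Terminating (R E : Set (Rule F V)) : Prop :=
  ¬ ∃ f : ℕ → Tm F V, ∀ n, RewMod R E (f n) (f (n + 1))

/-- `t` is reachable from some constant. -/
def FromConst (R : Set (Rule F V)) (t : Tm F V) : Prop :=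
  ∃ f : F, Reach R (Tm.app f []) t

/-- The measure `‖t‖`: number of positions of `t` whose subterm is not reachable
from a constant. -/
noncomputable def meas (R : Set (Rule F V)) (t : Tm F V) : ℕ :=
  Nat.card {p : List ℕ // ∃ u, t.subAt p = some u ∧ ¬ FromConst R u}

/-- `t` is a normal form w.r.t. `R/E`. -/
def NFMod (R E : Set (Rule F V)) (t : Tm F V) : Prop := ¬ ∃ t', RewMod R E t t'

/-- `t` is `R`-irreducible. -/
def NF (R : Set (Rule F V)) (t : Tm F V) : Prop := ¬ ∃ t', Rew R t t'

/-- Innermost rewrite step with `R` (plain rewriting): all proper subterms of the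
redex are irreducible. -/
def IRew (R : Set (Rule F V)) (s t : Tm F V) : Prop :=
  ∃ p, RewAt R p s t ∧
    ∀ (q : List ℕ) (w : Tm F V), q ≠ [] → s.subAt (p ++ q) = some w → NF R w

/-- Innermost rewrite step with `R` modulo `E`. -/
def IRewMod (R E : Set (Rule F V)) (s t : Tm F V) : Prop :=
  ∃ u v, ∃ p : List ℕ, Reach E s u ∧ RewAt R p u v ∧ Reach E v t ∧
    ∀ (q : List ℕ) (w : Tm F V), q ≠ [] → u.subAt (p ++ q) = some w → NFMod R E w

/-- Innermost termination of `R/E`. -/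
def ITerminating (R E : Set (Rule F V)) : Prop :=
  ¬ ∃ f : ℕ → Tm F V, ∀ n, IRewMod R E (f n) (f (n + 1))

end Rewriting

section Marking

variable {F V : Type}

/-- A derivation of length `n` with explicit rules, positions and substitutions. -/
def IsDeriv (R : Set (Rule F V)) (n : ℕ) (s : ℕ → Tm F V) (rl : ℕ → Rule F V)
    (pp : ℕ → List ℕ) (sb : ℕ → V → Tm F V) : Prop :=
  ∀ i < n, rl i ∈ R ∧ RewWith (rl i).lhs (rl i).rhs (pp i) (sb i) (s i) (s (i + 1))

/-- `p'` is strictly below `p̄` : `p̄` is a proper prefix of `p'`. -/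
def StrictBelow (pbar p : List ℕ) : Prop := ∃ q, q ≠ [] ∧ p = pbar ++ q

/-- A marking of a derivation. -/
def IsMarking (n : ℕ) (s : ℕ → Tm F V) (rl : ℕ → Rule F V)
    (pp : ℕ → List ℕ) (M : ℕ → List ℕ → Tm F V) : Prop :=
  (∀ p t, (s 0).subAt p = some t → M 0 p = t) ∧
  ∀ i < n,
    (∀ p, (s (i + 1)).IsPos p → ¬ StrictBelow (pp i) p → M (i + 1) p = M i p) ∧
    (∀ (j : ℕ) (u : Tm F V), (rl i).rhs.subAt [j] = some u → u.IsConst →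
        M (i + 1) (pp i ++ [j]) = u) ∧
    (∀ (j : ℕ) (p₁ : List ℕ) (x : V), (rl i).rhs.subAt [j] = some (Tm.var x) →
        (s (i + 1)).IsPos (pp i ++ j :: p₁) →
        ∃ q₀ : List ℕ, (rl i).lhs.subAt q₀ = some (Tm.var x) ∧
          M (i + 1) (pp i ++ j :: p₁) = M i (pp i ++ q₀ ++ p₁))

end Marking

section WFSig

variable {F V : Type}

/-- Terms respecting the arity function. -/
inductive WFT (ar : F → ℕ) : Tm F V → Prop
  | var (x : V) : WFT ar (Tm.var x)
  | app (f : F) (ts : List (Tm F V)) : ts.length = ar f →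
      (∀ t ∈ ts, WFT ar t) → WFT ar (Tm.app f ts)

end WFSig

/-!
Right-hand sides of `R` are flat, and rules of `E` are flat and height-preserving, so a step
can make a term deeper only by putting a constant of a right-hand side one level below the
redex. Following every position of a reduct of `s` that lies deeper than `height s` back to
the constants that created it yields nullary symbols `c₀, …, cₖ` in which each `cᵢ₊₁` occurs
strictly inside a reduct of `cᵢ`, and the depth of the position is at most `height s + k + 1`.
A reduct higher than `height s + |Σ₀|` therefore forces a constant that occurs strictly inside
one of its own reducts. Since `E` alone rewrites constants only to constants, that cycle contains an
`R`-step, and it can be pumped forever from `s`.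
-/

open Relation

namespace Tm

variable {F V : Type}

@[induction_eliminator]
theorem induction {P : Tm F V → Prop} (var : ∀ x, P (Tm.var x))
    (app : ∀ (f : F) (ts : List (Tm F V)), (∀ t ∈ ts, P t) → P (Tm.app f ts)) (t : Tm F V) :
    P t := by
  refine Tm.rec (motive_2 := fun ts => ∀ t ∈ ts, P t) var app (fun _ h => nomatch h) ?_ t
  intro a l pa pl t ht
  rcases List.mem_cons.1 ht with rfl | h
  exacts [pa, pl t h]

theorem height_app (f : F) (ts : List (Tm F V)) :
    height (app f ts) = ts.foldr (fun t m => max (height t + 1) m) 0 := by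
  rw [height]; exact List.foldr_attach (l := ts) (f := fun t m => max (height t + 1) m) (b := 0)

theorem height_const (c : F) : height (app c [] : Tm F V) = 0 := by simp [height_app]

theorem height_lt_height_app {f : F} {ts : List (Tm F V)} {t : Tm F V} (h : t ∈ ts) :
    height t < height (app f ts) := by
  rw [height_app]
  induction ts with
  | nil => cases h
  | cons a l ih =>
    rw [List.foldr_cons]
    rcases List.mem_cons.1 h with rfl | h
    · exact Nat.lt_of_lt_of_le (Nat.lt_succ_self _) (le_max_left _ _)
    · exact Nat.lt_of_lt_of_le (ih h) (le_max_right _ _)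

theorem height_app_le {f : F} {ts : List (Tm F V)} {n : ℕ} (h : ∀ t ∈ ts, height t < n) :
    height (app f ts) ≤ n := by
  rw [height_app]
  induction ts with
  | nil => simp
  | cons a l ih =>
    rw [List.foldr_cons, max_le_iff]
    exact ⟨h a List.mem_cons_self, ih fun t ht => h t (List.mem_cons_of_mem _ ht)⟩

theorem exists_const_of_height_eq_zero {t : Tm F V} (h : height t = 0) (ht : ∀ x, t ≠ var x) :
    ∃ c, t = app c [] := by
  cases t with
  | var x => exact absurd rfl (ht x)
  | app f ts =>
    cases ts with
    | nil => exact ⟨f, rfl⟩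
    | cons a l =>
      exact absurd h (Nat.ne_zero_of_lt (height_lt_height_app (f := f) List.mem_cons_self))

theorem subst_app (σ : V → Tm F V) (f : F) (ts : List (Tm F V)) :
    subst σ (app f ts) = app f (ts.map (subst σ)) := by
  rw [subst]; congr 1; exact List.attach_map_val

theorem subst_var (σ : V → Tm F V) (x : V) : subst σ (var x) = σ x := by rw [subst]

theorem subst_const (σ : V → Tm F V) (c : F) : subst σ (app c []) = app c [] := by
  rw [subst_app]; rfl

theorem varList_app (f : F) (ts : List (Tm F V)) :
    varList (app f ts) = (ts.map varList).flatten := by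
  rw [varList]; congr 1; exact List.attach_map_val

theorem subAt_nil (t : Tm F V) : subAt t [] = some t := by cases t <;> rfl

theorem subAt_app_cons (f : F) (ts : List (Tm F V)) (i : ℕ) (p : List ℕ) :
    subAt (app f ts) (i :: p) = ts[i]?.bind (fun u => subAt u p) := by
  cases h : ts[i]? <;> simp [subAt, h]

theorem subAt_const_cons (c : F) (i : ℕ) (p : List ℕ) :
    subAt (app c [] : Tm F V) (i :: p) = none := by
  simp [subAt_app_cons]

theorem subAt_append (p q : List ℕ) (t : Tm F V) :
    subAt t (p ++ q) = (subAt t p).bind (fun u => subAt u q) := by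
  induction p generalizing t with
  | nil => simp [subAt_nil]
  | cons i p ih =>
    cases t with
    | var x => rfl
    | app f ts =>
      rw [List.cons_append, subAt_app_cons, subAt_app_cons]
      cases ts[i]? with
      | none => rfl
      | some u => simpa using ih u

theorem subAt_append_of_subAt {t u : Tm F V} {p : List ℕ} (h : t.subAt p = some u)
    (q : List ℕ) : subAt t (p ++ q) = subAt u q := by
  rw [subAt_append, h, Option.bind_some]

theorem exists_mem_of_subAt_cons {f : F} {ts : List (Tm F V)} {i : ℕ} {p : List ℕ}
    {u : Tm F V} (h : subAt (app f ts) (i :: p) = some u) :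
    ∃ a, ts[i]? = some a ∧ a ∈ ts ∧ a.subAt p = some u := by
  rw [subAt_app_cons] at h
  cases hi : ts[i]? with
  | none => simp [hi] at h
  | some a =>
    rw [hi, Option.bind_some] at h
    exact ⟨a, rfl, List.mem_of_getElem? hi, h⟩

theorem length_add_height_le_of_subAt {t u : Tm F V} {p : List ℕ} (h : t.subAt p = some u) :
    p.length + u.height ≤ t.height := by
  induction t generalizing p with
  | var x =>
    cases p with
    | nil => cases h; simp [height]
    | cons i p => cases h
  | app f ts ih =>
    cases p with
    | nil => rw [subAt_nil] at h; cases h; simp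
    | cons i p =>
      obtain ⟨a, -, ha, hp⟩ := exists_mem_of_subAt_cons h
      have := ih a ha hp
      have := height_lt_height_app (f := f) ha
      simp only [List.length_cons]
      omega

theorem exists_subAt_length_eq_height (t : Tm F V) :
    ∃ p u, t.subAt p = some u ∧ p.length = t.height := by
  induction t with
  | var x => exact ⟨[], _, subAt_nil _, by simp [height]⟩
  | app f ts ih =>
    by_cases h0 : height (app f ts) = 0
    · exact ⟨[], _, subAt_nil _, by simp [h0]⟩
    obtain ⟨a, ha, heq⟩ : ∃ a ∈ ts, height (app f ts) = height a + 1 := by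
      by_contra! hc
      have : height (app f ts) ≤ height (app f ts) - 1 :=
        height_app_le fun t ht => by
          have := height_lt_height_app (f := f) ht
          have := hc t ht
          omega
      omega
    obtain ⟨p, u, hp, hlen⟩ := ih a ha
    obtain ⟨i, hi, rfl⟩ := List.getElem_of_mem ha
    exact ⟨i :: p, u, by rw [subAt_app_cons, List.getElem?_eq_getElem hi]; exact hp,
      by simp [hlen, heq]⟩

theorem mem_varList_iff {x : V} {t : Tm F V} :
    x ∈ varList t ↔ ∃ p, subAt t p = some (var x) := by
  induction t with
  | var y =>
    constructor
    · intro h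
      rw [varList, List.mem_singleton] at h
      exact ⟨[], by rw [subAt_nil, h]⟩
    · rintro ⟨_ | ⟨i, p⟩, hp⟩
      · cases hp; simp [varList]
      · cases hp
  | app f ts ih =>
    rw [varList_app, List.mem_flatten]
    constructor
    · rintro ⟨_, hl, hx⟩
      obtain ⟨a, ha, rfl⟩ := List.mem_map.1 hl
      obtain ⟨p, hp⟩ := (ih a ha).1 hx
      obtain ⟨i, hi, rfl⟩ := List.getElem_of_mem ha
      exact ⟨i :: p, by rw [subAt_app_cons, List.getElem?_eq_getElem hi]; exact hp⟩
    · rintro ⟨_ | ⟨i, p⟩, hp⟩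
      · cases hp
      · obtain ⟨a, -, ha, hp⟩ := exists_mem_of_subAt_cons hp
        exact ⟨varList a, List.mem_map.2 ⟨a, ha, rfl⟩, (ih a ha).2 ⟨p, hp⟩⟩

theorem subAt_subst_of_subAt (σ : V → Tm F V) {p : List ℕ} {t u : Tm F V}
    (h : subAt t p = some u) : subAt (subst σ t) p = some (subst σ u) := by
  induction p generalizing t with
  | nil => rw [subAt_nil] at h; cases h; exact subAt_nil _
  | cons i p ih =>
    cases t with
    | var x => cases h
    | app f ts =>
      obtain ⟨a, hi, -, hp⟩ := exists_mem_of_subAt_cons h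
      rw [subst_app, subAt_app_cons, List.getElem?_map, hi]
      exact ih hp

theorem subAt_subst_cases {σ : V → Tm F V} {p : List ℕ} {t u : Tm F V}
    (h : subAt (subst σ t) p = some u) :
    (∃ p₀ x p₂, p = p₀ ++ p₂ ∧ t.subAt p₀ = some (var x) ∧
        (σ x).subAt p₂ = some u) ∨
      ∃ u₀, t.subAt p = some u₀ ∧ (∀ x, u₀ ≠ var x) ∧ u = subst σ u₀ := by
  cases t with
  | var x => exact Or.inl ⟨[], x, p, rfl, subAt_nil _, by rwa [subst_var] at h⟩
  | app f ts =>
    cases p with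
    | nil =>
      rw [subAt_nil] at h
      exact Or.inr ⟨app f ts, subAt_nil _, fun _ => by simp, (Option.some_inj.1 h).symm⟩
    | cons i p =>
      rw [subst_app] at h
      obtain ⟨_, hi, -, hp⟩ := exists_mem_of_subAt_cons h
      rw [List.getElem?_map] at hi
      obtain ⟨a, hai, rfl⟩ := Option.map_eq_some_iff.1 hi
      have hsub : ∀ q, subAt (app f ts) (i :: q) = subAt a q := fun q => by
        rw [subAt_app_cons, hai, Option.bind_some]
      rcases subAt_subst_cases hp with
        ⟨p₀, x, p₂, rfl, hx, hσ⟩ | ⟨u₀, hu₀, hnv, rfl⟩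
      · exact Or.inl ⟨i :: p₀, x, p₂, rfl, by rw [hsub]; exact hx, hσ⟩
      · exact Or.inr ⟨u₀, by rw [hsub]; exact hu₀, hnv, rfl⟩

theorem replAt_nil (t v : Tm F V) : replAt t [] v = some v := by cases t <;> rfl

theorem replAt_app_cons (f : F) (ts : List (Tm F V)) (i : ℕ) (p : List ℕ) (v : Tm F V) :
    replAt (app f ts) (i :: p) v
      = ts[i]?.bind (fun u => (replAt u p v).map (fun u' => app f (ts.set i u'))) := by
  cases h : ts[i]? <;> simp [replAt, h]

theorem exists_of_replAt_cons {f : F} {ts : List (Tm F V)} {i : ℕ} {p : List ℕ}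
    {v t' : Tm F V} (h : replAt (app f ts) (i :: p) v = some t') :
    ∃ a a', ts[i]? = some a ∧ replAt a p v = some a' ∧ t' = app f (ts.set i a') := by
  rw [replAt_app_cons] at h
  cases hi : ts[i]? with
  | none => simp [hi] at h
  | some a =>
    rw [hi, Option.bind_some] at h
    obtain ⟨a', ha', rfl⟩ := Option.map_eq_some_iff.1 h
    exact ⟨a, a', rfl, ha', rfl⟩

theorem exists_replAt_of_subAt {q : List ℕ} {t u : Tm F V} (h : subAt t q = some u)
    (v : Tm F V) : ∃ t', replAt t q v = some t' := by
  induction q generalizing t with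
  | nil => exact ⟨v, replAt_nil t v⟩
  | cons i p ih =>
    cases t with
    | var x => cases h
    | app f ts =>
      obtain ⟨a, hi, -, hp⟩ := exists_mem_of_subAt_cons h
      obtain ⟨a', ha'⟩ := ih hp
      exact ⟨app f (ts.set i a'), by rw [replAt_app_cons, hi]; simp [ha']⟩

theorem subAt_of_replAt {v : Tm F V} {q : List ℕ} {t t' : Tm F V}
    (h : replAt t q v = some t') : subAt t' q = some v := by
  induction q generalizing t t' with
  | nil => rw [replAt_nil] at h; cases h; exact subAt_nil v
  | cons i p ih =>
    cases t with
    | var x => cases h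
    | app f ts =>
      obtain ⟨a, a', hi, ha', rfl⟩ := exists_of_replAt_cons h
      rw [subAt_app_cons, List.getElem?_set_self (List.getElem?_eq_some_iff.1 hi).1]
      exact ih ha'

theorem replAt_append {v : Tm F V} (p : List ℕ) {rest : List ℕ} {t t' : Tm F V}
    (h : replAt t (p ++ rest) v = some t') :
    ∃ u u', subAt t p = some u ∧ replAt u rest v = some u' ∧ subAt t' p = some u' := by
  induction p generalizing t t' with
  | nil => exact ⟨t, t', subAt_nil t, h, subAt_nil t'⟩
  | cons i p ih =>
    cases t with
    | var x => cases h
    | app f ts =>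
      obtain ⟨a, a', hi, ha', rfl⟩ := exists_of_replAt_cons h
      obtain ⟨u, u', h1, h2, h3⟩ := ih ha'
      refine ⟨u, u', by rw [subAt_app_cons, hi]; exact h1, h2, ?_⟩
      rw [subAt_app_cons, List.getElem?_set_self (List.getElem?_eq_some_iff.1 hi).1]
      exact h3

theorem replAt_append_of_subAt {v : Tm F V} (p : List ℕ) {p' : List ℕ} {t u u' t' : Tm F V}
    (h₁ : subAt t p = some u) (h₂ : replAt u p' v = some u') (h₃ : replAt t p u' = some t') :
    replAt t (p ++ p') v = some t' := by
  induction p generalizing t t' with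
  | nil =>
    rw [subAt_nil] at h₁; cases h₁
    rw [replAt_nil] at h₃; cases h₃
    exact h₂
  | cons i p ih =>
    cases t with
    | var x => cases h₁
    | app f ts =>
      obtain ⟨a, a', hi, ha', rfl⟩ := exists_of_replAt_cons h₃
      have h₁' : subAt a p = some u := by rwa [subAt_app_cons, hi, Option.bind_some] at h₁
      rw [List.cons_append, replAt_app_cons, hi, Option.bind_some, ih h₁' ha']
      rfl

theorem subAt_replAt_of_ne {v : Tm F V} {i j : ℕ} (hij : i ≠ j) (w : List ℕ) {q' : List ℕ}
    {t t' : Tm F V} (h : replAt t (w ++ j :: q') v = some t') (p' : List ℕ) :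
    subAt t' (w ++ i :: p') = subAt t (w ++ i :: p') := by
  induction w generalizing t t' with
  | nil =>
    cases t with
    | var x => cases h
    | app f ts =>
      obtain ⟨a, a', -, -, rfl⟩ := exists_of_replAt_cons h
      rw [List.nil_append, subAt_app_cons, subAt_app_cons, List.getElem?_set_ne hij.symm]
  | cons k w ih =>
    cases t with
    | var x => cases h
    | app f ts =>
      obtain ⟨a, a', hk, ha', rfl⟩ := exists_of_replAt_cons h
      rw [List.cons_append, subAt_app_cons, subAt_app_cons,
        List.getElem?_set_self (List.getElem?_eq_some_iff.1 hk).1, hk]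
      exact ih ha'

end Tm

theorem List.prefix_or_prefix_or_diverge (p q : List ℕ) :
    p <+: q ∨ q <+: p ∨
      ∃ (w : List ℕ) (i j : ℕ) (p' q' : List ℕ),
        i ≠ j ∧ p = w ++ i :: p' ∧ q = w ++ j :: q' := by
  induction p generalizing q with
  | nil => exact Or.inl List.nil_prefix
  | cons i p ih =>
    cases q with
    | nil => exact Or.inr (Or.inl List.nil_prefix)
    | cons j q =>
      by_cases hij : i = j
      · subst hij
        rcases ih q with h | h | ⟨w, a, b, p', q', hab, rfl, rfl⟩
        · exact Or.inl (List.cons_prefix_cons.mpr ⟨rfl, h⟩)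
        · exact Or.inr (Or.inl (List.cons_prefix_cons.mpr ⟨rfl, h⟩))
        · exact Or.inr (Or.inr ⟨i :: w, a, b, p', q', hab, rfl, rfl⟩)
      · exact Or.inr (Or.inr ⟨[], i, j, p, q, hij, rfl, rfl⟩)

theorem WFT.subAt {F V : Type} {ar : F → ℕ} {t u : Tm F V} {p : List ℕ} (ht : WFT ar t)
    (h : t.subAt p = some u) : WFT ar u := by
  induction ht generalizing p with
  | var x => cases p with
    | nil => cases h; exact WFT.var x
    | cons i p => cases h
  | app f ts hlen hts ih =>
    cases p with
    | nil => rw [Tm.subAt_nil] at h; cases h; exact WFT.app f ts hlen hts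
    | cons i p =>
      obtain ⟨a, -, ha, hp⟩ := Tm.exists_mem_of_subAt_cons h
      exact ih a ha hp

theorem WFT.arity_eq_zero {F V : Type} {ar : F → ℕ} {c : F}
    (h : WFT ar (Tm.app c [] : Tm F V)) :
    ar c = 0 := by
  cases h with
  | app _ _ hlen _ => exact hlen.symm

section Rewriting

variable {F V : Type}

theorem rew_union_iff {R E : Set (Rule F V)} {s t : Tm F V} :
    Rew (R ∪ E) s t ↔ Rew R s t ∨ Rew E s t := by
  constructor
  · rintro ⟨p, rl, hrl | hrl, σ, hw⟩
    · exact Or.inl ⟨p, rl, hrl, σ, hw⟩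
    · exact Or.inr ⟨p, rl, hrl, σ, hw⟩
  · rintro (⟨p, rl, hrl, σ, hw⟩ | ⟨p, rl, hrl, σ, hw⟩)
    · exact ⟨p, rl, Or.inl hrl, σ, hw⟩
    · exact ⟨p, rl, Or.inr hrl, σ, hw⟩

theorem rew_of_mem {S : Set (Rule F V)} {rl : Rule F V} (hrl : rl ∈ S) (σ : V → Tm F V) :
    Rew S (rl.lhs.subst σ) (rl.rhs.subst σ) :=
  ⟨[], rl, hrl, σ, Tm.subAt_nil _, Tm.replAt_nil _ _⟩

theorem Rew.context {S : Set (Rule F V)} {u u' t : Tm F V} {p : List ℕ}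
    (h : Rew S u u') (hsub : t.subAt p = some u) :
    ∃ t', t.replAt p u' = some t' ∧ Rew S t t' := by
  obtain ⟨p', rl, hrl, σ, h₁, h₂⟩ := h
  obtain ⟨t', ht'⟩ := Tm.exists_replAt_of_subAt hsub u'
  exact ⟨t', ht', p ++ p', rl, hrl, σ, by rw [Tm.subAt_append_of_subAt hsub]; exact h₁,
    Tm.replAt_append_of_subAt p hsub h₂ ht'⟩

theorem reflTransGen_rew_context {S : Set (Rule F V)} {u u' : Tm F V}
    (h : ReflTransGen (Rew S) u u') {t : Tm F V} {p : List ℕ} (hsub : t.subAt p = some u) :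
    ∃ t', ReflTransGen (Rew S) t t' ∧ t'.subAt p = some u' := by
  induction h using ReflTransGen.head_induction_on generalizing t with
  | refl => exact ⟨t, ReflTransGen.refl, hsub⟩
  | head hstep _ ih =>
    obtain ⟨t₁, hrep, ht₁⟩ := hstep.context hsub
    obtain ⟨t', htt', hsub'⟩ := ih (Tm.subAt_of_replAt hrep)
    exact ⟨t', ReflTransGen.head ht₁ htt', hsub'⟩

theorem reflTransGen_rew_union_of_rewMod {R E : Set (Rule F V)} {x y : Tm F V}
    (h : ReflTransGen (RewMod R E) x y) : ReflTransGen (Rew (R ∪ E)) x y := by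
  have hR : ∀ a b, Rew R a b → Rew (R ∪ E) a b := fun _ _ h => rew_union_iff.2 (Or.inl h)
  have hE : ∀ a b, Rew E a b → Rew (R ∪ E) a b := fun _ _ h => rew_union_iff.2 (Or.inr h)
  induction h with
  | refl => exact ReflTransGen.refl
  | tail _ hstep ih =>
    obtain ⟨u, v, h₁, h₂, h₃⟩ := hstep
    exact ih.trans
      (((ReflTransGen.mono hE _ _ h₁).tail (hR _ _ h₂)).trans (ReflTransGen.mono hE _ _ h₃))

theorem reflTransGen_rew_union_cases {R E : Set (Rule F V)} {x y : Tm F V}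
    (h : ReflTransGen (Rew (R ∪ E)) x y) :
    ReflTransGen (Rew E) x y ∨
      ∃ a b, ReflTransGen (Rew E) x a ∧ Rew R a b ∧ ReflTransGen (Rew (R ∪ E)) b y := by
  induction h using ReflTransGen.head_induction_on with
  | refl => exact Or.inl ReflTransGen.refl
  | @head u v hstep htail ih =>
    rcases rew_union_iff.1 hstep with hR | hE
    · exact Or.inr ⟨u, v, ReflTransGen.refl, hR, htail⟩
    · rcases ih with hE' | ⟨a, b, h₁, h₂, h₃⟩
      · exact Or.inl (ReflTransGen.head hE hE')
      · exact Or.inr ⟨a, b, ReflTransGen.head hE h₁, h₂, h₃⟩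

theorem PermutativeTheory.rew_const {E : Set (Rule F V)} (hE : PermutativeTheory E) {c : F}
    {t : Tm F V} (h : Rew E (Tm.app c []) t) : ∃ c', t = Tm.app c' [] := by
  obtain ⟨_ | ⟨i, p⟩, rl, hrl, σ, h₁, h₂⟩ := h
  · rw [Tm.subAt_nil, Option.some_inj] at h₁
    rw [Tm.replAt_nil, Option.some_inj] at h₂
    have hperm := hE.1 rl hrl
    have hl : rl.lhs = Tm.app c [] := by
      cases hl : rl.lhs with
      | var x => exact absurd hl (hperm.1.1 x)
      | app f ts =>
        rw [hl, Tm.subst_app] at h₁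
        obtain ⟨rfl, hts⟩ := Tm.app.inj h₁
        rw [List.eq_nil_of_map_eq_nil hts.symm]
    have hr : rl.rhs.height = 0 := by rw [← hperm.2.2.2.2.2.1, hl, Tm.height_const]
    obtain ⟨c', hc'⟩ := Tm.exists_const_of_height_eq_zero hr (hE.1 _ (hE.2 rl hrl)).1.1
    exact ⟨c', by rw [← h₂, hc', Tm.subst_const]⟩
  · simp [Tm.subAt_const_cons] at h₁

theorem PermutativeTheory.reflTransGen_const {E : Set (Rule F V)} (hE : PermutativeTheory E)
    {c : F} {t : Tm F V} (h : ReflTransGen (Rew E) (Tm.app c []) t) : ∃ c', t = Tm.app c' [] := by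
  induction h with
  | refl => exact ⟨c, rfl⟩
  | tail _ hstep ih =>
    obtain ⟨c₁, rfl⟩ := ih
    exact hE.rew_const hstep

end Rewriting

theorem List.Pairwise.exists_rel_self_of_natCard_lt {α : Type*} {r : α → α → Prop}
    {P : α → Prop} [Finite {a // P a}] {l : List α} (hl : l.Pairwise r) (hP : ∀ a ∈ l, P a)
    (hcard : Nat.card {a // P a} < l.length) : ∃ a ∈ l, r a a := by
  by_contra! hirrefl
  have hnd : l.Nodup := hl.imp_of_mem fun ha _ hab heq => by subst heq; exact hirrefl _ ha hab
  have := (hnd.pmap (f := Subtype.mk) (H := hP) fun _ _ _ _ => Subtype.mk.inj).length_le_natCard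
  rw [List.length_pmap] at this
  exact absurd this (not_le.2 hcard)

theorem exists_seq_of_forall_exists {α : Type*} {r : α → α → Prop} {P : α → Prop} {a : α}
    (ha : P a) (h : ∀ x, P x → ∃ y, r x y ∧ P y) :
    ∃ f : ℕ → α, f 0 = a ∧ ∀ n, r (f n) (f (n + 1)) := by
  choose g hg using h
  let f : ℕ → {x // P x} := fun n =>
    Nat.rec ⟨a, ha⟩ (fun _ x => ⟨g x.1 x.2, (hg x.1 x.2).2⟩) n
  exact ⟨fun n => (f n).1, rfl, fun n => (hg _ _).1⟩

section Spawning

variable {F V : Type}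

def Spawns (S : Set (Rule F V)) (c c' : F) : Prop :=
  ∃ w : Tm F V, ReflTransGen (Rew S) (Tm.app c []) w ∧
    ∃ p, p ≠ [] ∧ w.subAt p = some (Tm.app c' [])

def OccursInReduct (S : Set (Rule F V)) (s : Tm F V) (c : F) : Prop :=
  ∃ w p, ReflTransGen (Rew S) s w ∧ w.subAt p = some (Tm.app c [])

theorem Spawns.trans {S : Set (Rule F V)} {a b c : F} (h₁ : Spawns S a b) (h₂ : Spawns S b c) :
    Spawns S a c := by
  obtain ⟨w₁, hw₁, p₁, hp₁, hs₁⟩ := h₁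
  obtain ⟨w₂, hw₂, p₂, -, hs₂⟩ := h₂
  obtain ⟨w, hw, hs⟩ := reflTransGen_rew_context hw₂ hs₁
  exact ⟨w, hw₁.trans hw, p₁ ++ p₂, by simp [hp₁],
    by rw [Tm.subAt_append_of_subAt hs, hs₂]⟩

theorem OccursInReduct.exists_rewMod {R E : Set (Rule F V)} (hE : PermutativeTheory E) {c : F}
    (hc : Spawns (R ∪ E) c c) {y : Tm F V} (hy : OccursInReduct (R ∪ E) y c) :
    ∃ z, RewMod R E y z ∧ OccursInReduct (R ∪ E) z c := by
  obtain ⟨x, π, hyx, hxπ⟩ := hy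
  rcases reflTransGen_rew_union_cases hyx with hyx | ⟨a, b, h₁, h₂, h₃⟩
  swap
  · exact ⟨b, ⟨a, b, h₁, h₂, ReflTransGen.refl⟩, x, π, h₃, hxπ⟩
  -- `y` reaches `x` by `E`-steps alone, so the `R`-step is taken from the cycle, inside `x` at `π`
  obtain ⟨w, hcw, p, hp, hwc⟩ := hc
  rcases reflTransGen_rew_union_cases hcw with hcw | ⟨a, b, h₁, h₂, h₃⟩
  · obtain ⟨c', rfl⟩ := hE.reflTransGen_const hcw
    obtain ⟨i, p, rfl⟩ := List.exists_cons_of_ne_nil hp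
    simp [Tm.subAt_const_cons] at hwc
  obtain ⟨xa, hxxa, hxa⟩ := reflTransGen_rew_context h₁ hxπ
  obtain ⟨xb, hrep, hxab⟩ := h₂.context hxa
  obtain ⟨x', hxbx', hx'⟩ := reflTransGen_rew_context h₃ (Tm.subAt_of_replAt hrep)
  exact ⟨xb, ⟨xa, xb, hyx.trans hxxa, hxab, ReflTransGen.refl⟩, x', π ++ p, hxbx',
    by rw [Tm.subAt_append_of_subAt hx', hwc]⟩

theorem not_terminatingFrom_of_spawns_self {R E : Set (Rule F V)} (hE : PermutativeTheory E)
    {s : Tm F V} {c : F} (hc : Spawns (R ∪ E) c c) (hs : OccursInReduct (R ∪ E) s c) :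
    ¬ TerminatingFrom R E s := fun hterm =>
  hterm (exists_seq_of_forall_exists (P := fun y => OccursInReduct (R ∪ E) y c) hs
    fun _ hy => hy.exists_rewMod hE hc)

end Spawning

section Depth

variable {F V : Type}

/-- The chain `c :: cs` lists the constants newest first: each is spawned by all later ones. -/
def DepthJustified (S : Set (Rule F V)) (ar : F → ℕ) (s : Tm F V) (p : List ℕ) (u : Tm F V) :
    Prop :=
  p.length ≤ s.height ∨
    ∃ c cs, (c :: cs).Pairwise (flip (Spawns S)) ∧ ReflTransGen (Rew S) (Tm.app c []) u ∧
      p.length ≤ s.height + cs.length + 1 ∧ ∀ e ∈ c :: cs, ar e = 0 ∧ OccursInReduct S s e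

namespace DepthJustified

variable {S : Set (Rule F V)} {ar : F → ℕ} {s : Tm F V} {p : List ℕ} {u : Tm F V}

theorem mono {p' : List ℕ} (h : DepthJustified S ar s p u) (hp : p'.length ≤ p.length) :
    DepthJustified S ar s p' u := by
  rcases h with h | ⟨c, cs, hcs, hcu, hp', hocc⟩
  exacts [Or.inl (hp.trans h), Or.inr ⟨c, cs, hcs, hcu, hp.trans hp', hocc⟩]

theorem rew {u' : Tm F V} (h : DepthJustified S ar s p u) (hu : Rew S u u') :
    DepthJustified S ar s p u' := by
  rcases h with h | ⟨c, cs, hcs, hcu, hp, hocc⟩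
  exacts [Or.inl h, Or.inr ⟨c, cs, hcs, hcu.tail hu, hp, hocc⟩]

theorem spawn {c' : F} {j : ℕ} (h : DepthJustified S ar s p u)
    (hu : u.subAt [j] = some (Tm.app c' [])) (har : ar c' = 0) (hocc : OccursInReduct S s c') :
    DepthJustified S ar s (p ++ [j]) (Tm.app c' []) := by
  refine Or.inr ?_
  rcases h with h | ⟨c, cs, hcs, hcu, hp, hcs_occ⟩
  · exact ⟨c', [], List.pairwise_singleton _ _, ReflTransGen.refl, by simp [h],
      by simp [har, hocc]⟩
  · have hspawn : Spawns S c c' := ⟨u, hcu, [j], by simp, hu⟩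
    refine ⟨c', c :: cs, List.pairwise_cons.2 ⟨fun e he => ?_, hcs⟩, ReflTransGen.refl,
      by simp only [List.length_append, List.length_cons, List.length_nil]; omega, ?_⟩
    · rcases List.mem_cons.1 he with rfl | he
      exacts [hspawn, (List.rel_of_pairwise_cons hcs he).trans hspawn]
    · rintro e (_ | ⟨_, he⟩)
      exacts [⟨har, hocc⟩, hcs_occ e he]

theorem of_subAt_contractum {rl : Rule F V} {t t' : Tm F V} {q p₁ : List ℕ} {σ : V → Tm F V}
    (hrl : rl ∈ S) (hwf : rl.WF) (hflat : rl.RightFlat) (hwft : WFT ar rl.rhs)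
    (hreach : ReflTransGen (Rew S) s t') (hstep : RewWith rl.lhs rl.rhs q σ t t')
    (hinv : ∀ p u, t.subAt p = some u → DepthJustified S ar s p u)
    (hu : (rl.rhs.subst σ).subAt p₁ = some u) : DepthJustified S ar s (q ++ p₁) u := by
  have hcontractum : DepthJustified S ar s q (rl.rhs.subst σ) :=
    (hinv q _ hstep.1).rew (rew_of_mem hrl σ)
  rcases Tm.subAt_subst_cases hu with
    ⟨p₀, x, p₂, rfl, hx, hσx⟩ | ⟨u₀, hu₀, hnv, rfl⟩
  · -- `u` lies in `σ x`, which also occurs in the redex, at least as deep as in the contractum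
    obtain ⟨py, hpy⟩ := Tm.mem_varList_iff.1 (hwf.2 x (Tm.mem_varList_iff.2 ⟨p₀, hx⟩))
    have hpy_ne : py ≠ [] := by
      rintro rfl
      exact hwf.1 x (Option.some_inj.1 ((Tm.subAt_nil _).symm.trans hpy))
    have hp₀ : p₀.length ≤ 1 := by
      have := Tm.length_add_height_le_of_subAt hx
      unfold Rule.RightFlat Tm.Flat at hflat
      omega
    have ht : t.subAt (q ++ (py ++ p₂)) = some u := by
      rw [Tm.subAt_append_of_subAt hstep.1,
        Tm.subAt_append_of_subAt (Tm.subAt_subst_of_subAt σ hpy),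
        Tm.subst_var, hσx]
    refine (hinv _ _ ht).mono ?_
    have := List.length_pos_of_ne_nil hpy_ne
    simp only [List.length_append]
    omega
  · cases p₁ with
    | nil =>
      rw [Tm.subAt_nil, Option.some_inj] at hu₀
      subst hu₀
      simpa using hcontractum
    | cons j p₂ =>
      have hlen := (Tm.length_add_height_le_of_subAt hu₀).trans hflat
      simp only [List.length_cons] at hlen
      obtain rfl : p₂ = [] := List.eq_nil_of_length_eq_zero (by omega)
      obtain ⟨c', rfl⟩ := Tm.exists_const_of_height_eq_zero (by omega) hnv
      have hc' := Tm.subAt_subst_of_subAt σ hu₀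
      rw [Tm.subst_const] at hc' ⊢
      exact hcontractum.spawn hc' (hwft.subAt hu₀).arity_eq_zero
        ⟨t', q ++ [j], hreach,
          by rw [Tm.subAt_append_of_subAt (Tm.subAt_of_replAt hstep.2), hc']⟩

theorem of_rew (hS : ∀ r ∈ S, r.WF ∧ r.RightFlat ∧ WFT ar r.rhs) {t t' : Tm F V}
    (hreach : ReflTransGen (Rew S) s t') (hstep : Rew S t t')
    (hinv : ∀ p u, t.subAt p = some u → DepthJustified S ar s p u)
    (hu : t'.subAt p = some u) : DepthJustified S ar s p u := by
  obtain ⟨q, rl, hrl, σ, hstep⟩ := hstep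
  obtain ⟨hwf, hflat, hwft⟩ := hS rl hrl
  rcases List.prefix_or_prefix_or_diverge q p with
    ⟨p₁, rfl⟩ | ⟨rest, rfl⟩ | ⟨w, i, j, p', q', hij, rfl, rfl⟩
  · rw [Tm.subAt_append_of_subAt (Tm.subAt_of_replAt hstep.2)] at hu
    exact of_subAt_contractum hrl hwf hflat hwft hreach hstep hinv hu
  · obtain ⟨u₀, u₀', h₁, h₂, h₃⟩ := Tm.replAt_append p hstep.2
    obtain rfl := Option.some_inj.1 (hu.symm.trans h₃)
    exact (hinv p u₀ h₁).rew
      ⟨rest, rl, hrl, σ, (Tm.subAt_append_of_subAt h₁ rest).symm.trans hstep.1, h₂⟩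
  · rw [Tm.subAt_replAt_of_ne hij.symm w hstep.2] at hu
    exact hinv _ _ hu

theorem of_reflTransGen (hS : ∀ r ∈ S, r.WF ∧ r.RightFlat ∧ WFT ar r.rhs) {t : Tm F V}
    (h : ReflTransGen (Rew S) s t) (hu : t.subAt p = some u) : DepthJustified S ar s p u := by
  induction h generalizing p u with
  | refl =>
    have := Tm.length_add_height_le_of_subAt hu
    exact Or.inl (by omega)
  | tail hst hstep ih => exact of_rew hS (hst.tail hstep) hstep (fun _ _ => ih) hu

end DepthJustified

end Depth

theorem stmt5_general {F V : Type} [Fintype F] (ar : F → ℕ) (R E : Set (Rule F V))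
    (hRflat : ∀ r ∈ R, r.RightFlat) (hRwf : ∀ r ∈ R, r.WF)
    (hE : PermutativeTheory E)
    (hwf : ∀ r ∈ R ∪ E, WFT ar r.lhs ∧ WFT ar r.rhs)
    (s : Tm F V)
    (hterm : TerminatingFrom R E s) :
    ∀ t : Tm F V, Relation.ReflTransGen (RewMod R E) s t →
      t.height ≤ s.height + Nat.card {f : F // ar f = 0} := by
  intro t hst
  have hS : ∀ r ∈ R ∪ E, r.WF ∧ r.RightFlat ∧ WFT ar r.rhs := by
    rintro r (hr | hr)
    · exact ⟨hRwf r hr, hRflat r hr, (hwf r (Or.inl hr)).2⟩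
    · exact ⟨(hE.1 r hr).1, (hE.1 r hr).2.2.2.2.1, (hwf r (Or.inr hr)).2⟩
  obtain ⟨p, u, hu, hp⟩ := t.exists_subAt_length_eq_height
  rcases DepthJustified.of_reflTransGen hS (reflTransGen_rew_union_of_rewMod hst) hu with
    hle | ⟨c, cs, hchain, -, hlen, hcs⟩
  · omega
  by_contra! hgt
  obtain ⟨e, he, hcycle⟩ := hchain.exists_rel_self_of_natCard_lt (fun e he => (hcs e he).1)
    (by simp only [List.length_cons]; omega)
  exact not_terminatingFrom_of_spawns_self hE hcycle (hcs e he).2 hterm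

/-- For a right-flat TRS `R` and permutative theory `E`, if `R/E` is
terminating from `s`, then every term reachable from `s` with `R/E` has height at most
`height(s) + |Σ₀|`. -/
theorem stmt5 {F V : Type} [Fintype F] (ar : F → ℕ) (R E : Set (Rule F V))
    (hRflat : ∀ r ∈ R, r.RightFlat) (hRwf : ∀ r ∈ R, r.WF)
    (hE : PermutativeTheory E)
    (hwf : ∀ r ∈ R ∪ E, WFT ar r.lhs ∧ WFT ar r.rhs)
    (s : Tm F V) (hs : WFT ar s)
    (hterm : TerminatingFrom R E s) :
    ∀ t : Tm F V, Relation.ReflTransGen (RewMod R E) s t →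
      t.height ≤ s.height + Nat.card {f : F // ar f = 0} :=
  stmt5_general ar R E hRflat hRwf hE hwf s hterm
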